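/- The class-6 Goursat distribution D = ⟨∂₆, x₆∂₅ + ∂₄ + x₅(x₄∂₃ + x₃∂₂ + ∂₁)⟩ on ℝ⁶ is not a 4-contact distribution: on no neighbourhood of the origin do there exist four commuting Lie symmetries S₁,...,S₄ of D with ⟨S₁,...,S₄⟩ ⊕ D = Tℝ⁶. -/

import Mathlib

noncomputable def lieBracket {n : ℕ} (X Y : (Fin n → ℝ) → (Fin n → ℝ)) :
    (Fin n → ℝ) → (Fin n → ℝ) :=
  fun p => fderiv ℝ Y p (X p) - fderiv ℝ X p (Y p)

noncomputable def X1 : (Fin 6 → ℝ) → (Fin 6 → ℝ) := fun _ => ![0, 0, 0, 0, 0, 1]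
noncomputable def X2 : (Fin 6 → ℝ) → (Fin 6 → ℝ) :=
  fun p => ![p 4, p 4 * p 2, p 4 * p 3, 1, p 5, 0]

noncomputable def D (p : Fin 6 → ℝ) : Submodule ℝ (Fin 6 → ℝ) :=
  Submodule.span ℝ {X1 p, X2 p}

section Helpers

abbrev E6 := Fin 6 → ℝ

section vec6
variable (a b c d e f : ℝ)
@[simp] lemma vec6_0 : (![a,b,c,d,e,f] : Fin 6 → ℝ) 0 = a := rfl
@[simp] lemma vec6_1 : (![a,b,c,d,e,f] : Fin 6 → ℝ) 1 = b := rfl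
@[simp] lemma vec6_2 : (![a,b,c,d,e,f] : Fin 6 → ℝ) 2 = c := rfl
@[simp] lemma vec6_3 : (![a,b,c,d,e,f] : Fin 6 → ℝ) 3 = d := rfl
@[simp] lemma vec6_4 : (![a,b,c,d,e,f] : Fin 6 → ℝ) 4 = e := rfl
@[simp] lemma vec6_5 : (![a,b,c,d,e,f] : Fin 6 → ℝ) 5 = f := rfl
end vec6

noncomputable def pd (j : Fin 6) (f : E6 → ℝ) : E6 → ℝ :=
  fun p => fderiv ℝ f p (Pi.single j 1)

@[fun_prop] lemma contDiff_coord (i : Fin 6) : ContDiff ℝ (⊤ : ℕ∞) (fun p : E6 => p i) :=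
  (ContinuousLinearMap.proj i : E6 →L[ℝ] ℝ).contDiff

@[fun_prop] lemma pd_contDiff {f : E6 → ℝ} (hf : ContDiff ℝ (⊤ : ℕ∞) f) (j : Fin 6) :
    ContDiff ℝ (⊤ : ℕ∞) (pd j f) :=
  ((hf.fderiv_right (m := (⊤ : ℕ∞)) (by simp)).clm_apply contDiff_const)

lemma pd_congr {U : Set E6} (hU : IsOpen U) {f g : E6 → ℝ}
    (h : ∀ p ∈ U, f p = g p) {p : E6} (hp : p ∈ U) (j : Fin 6) :
    pd j f p = pd j g p := by
  have hev : f =ᶠ[nhds p] g := Filter.eventuallyEq_of_mem (hU.mem_nhds hp) h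
  simp only [pd, hev.fderiv_eq]

lemma pd_add {f g : E6 → ℝ} (hf : ContDiff ℝ (⊤ : ℕ∞) f) (hg : ContDiff ℝ (⊤ : ℕ∞) g)
    (j : Fin 6) (p : E6) :
    pd j (fun q => f q + g q) p = pd j f p + pd j g p := by
  simp only [pd]
  rw [show (fun q => f q + g q) = f + g from rfl, fderiv_add (hf.differentiable (by simp) p) (hg.differentiable (by simp) p)]; rfl

lemma pd_sub {f g : E6 → ℝ} (hf : ContDiff ℝ (⊤ : ℕ∞) f) (hg : ContDiff ℝ (⊤ : ℕ∞) g)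
    (j : Fin 6) (p : E6) :
    pd j (fun q => f q - g q) p = pd j f p - pd j g p := by
  simp only [pd]
  rw [show (fun q => f q - g q) = f - g from rfl, fderiv_sub (hf.differentiable (by simp) p) (hg.differentiable (by simp) p)]; rfl

lemma pd_mul {f g : E6 → ℝ} (hf : ContDiff ℝ (⊤ : ℕ∞) f) (hg : ContDiff ℝ (⊤ : ℕ∞) g)
    (j : Fin 6) (p : E6) :
    pd j (fun q => f q * g q) p = f p * pd j g p + g p * pd j f p := by
  simp only [pd]
  rw [show (fun q => f q * g q) = f * g from rfl, fderiv_mul (hf.differentiable (by simp) p) (hg.differentiable (by simp) p)]; rfl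

lemma pd_const (c : ℝ) (j : Fin 6) (p : E6) : pd j (fun _ => c) p = 0 := by
  simp [pd]

lemma pd_coord (i j : Fin 6) (p : E6) :
    pd j (fun q : E6 => q i) p = (Pi.single j (1:ℝ) : E6) i := by
  have : fderiv ℝ (fun q : E6 => q i) p = (ContinuousLinearMap.proj i : E6 →L[ℝ] ℝ) :=
    (ContinuousLinearMap.proj i : E6 →L[ℝ] ℝ).fderiv
  simp [pd, this]

/-- Schwarz symmetry of second derivatives. -/
lemma pd_pd_comm {f : E6 → ℝ} (hf : ContDiff ℝ (⊤ : ℕ∞) f) (i j : Fin 6) (p : E6) :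
    pd i (pd j f) p = pd j (pd i f) p := by
  have hdf : ∀ y, HasFDerivAt f (fderiv ℝ f y) y := fun y =>
    (hf.differentiable (by simp) y).hasFDerivAt
  have h2 : ContDiff ℝ (⊤ : ℕ∞) (fderiv ℝ f) := hf.fderiv_right (m := (⊤ : ℕ∞)) (by simp)
  have hdf2 : HasFDerivAt (fderiv ℝ f) (fderiv ℝ (fderiv ℝ f) p) p :=
    (h2.differentiable (by simp) p).hasFDerivAt
  have hsym := second_derivative_symmetric hdf hdf2
  have expand : ∀ i j : Fin 6,
      pd i (pd j f) p = fderiv ℝ (fderiv ℝ f) p (Pi.single i 1) (Pi.single j 1) := by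
    intro i j
    have hc : (pd j f) = fun q => (ContinuousLinearMap.apply ℝ ℝ (Pi.single j (1:ℝ)))
        (fderiv ℝ f q) := rfl
    have hcomp : HasFDerivAt (pd j f)
        ((ContinuousLinearMap.apply ℝ ℝ (Pi.single j (1:ℝ))).comp
          (fderiv ℝ (fderiv ℝ f) p)) p := by
      rw [hc]
      exact (ContinuousLinearMap.hasFDerivAt _).comp p hdf2
    simp only [pd]
    rw [hcomp.fderiv]
    rfl
  rw [expand i j, expand j i, hsym]

lemma fderiv_expand {f : E6 → ℝ} {p : E6} (v : E6) :
    fderiv ℝ f p v = ∑ j : Fin 6, v j * pd j f p := by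
  have hv : v = ∑ j : Fin 6, v j • (Pi.single j (1:ℝ) : E6) := by
    funext k
    simp [Finset.sum_apply, Pi.single_apply, Finset.sum_ite_eq']
  conv_lhs => rw [hv]
  rw [map_sum]
  refine Finset.sum_congr rfl fun j _ => ?_
  rw [map_smul]
  rfl

lemma fderiv_comp_proj {s : E6 → E6} (hs : ContDiff ℝ (⊤ : ℕ∞) s) (k : Fin 6) (p w : E6) :
    fderiv ℝ s p w k = fderiv ℝ (fun q => s q k) p w := by
  have h := ((ContinuousLinearMap.proj k : E6 →L[ℝ] ℝ).hasFDerivAt (x := s p)).comp p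
    (hs.differentiable (by simp) p).hasFDerivAt
  have heq : (fun q => s q k) = (ContinuousLinearMap.proj k : E6 →L[ℝ] ℝ) ∘ s := rfl
  rw [heq, h.fderiv]
  rfl

lemma slice_pd {U : Set E6} (hU : IsOpen U) {F : E6 → ℝ} (hF : ContDiff ℝ (⊤ : ℕ∞) F)
    (h : ∀ p ∈ U, p 4 = 0 → F p = 0) {q : E6} (hq : q ∈ U) (hq4 : q 4 = 0)
    {j : Fin 6} (hj : j ≠ 4) : pd j F q = 0 := by
  set v : E6 := Pi.single j 1 with hv
  have hv4 : v 4 = 0 := by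
    rw [hv, Pi.single_apply, if_neg (by exact fun h' => hj h'.symm)]
  have hcont : Continuous fun t : ℝ => q + t • v := by continuity
  have hmem : ∀ᶠ t : ℝ in nhds (0:ℝ), q + t • v ∈ U := by
    have : (fun t : ℝ => q + t • v) ⁻¹' U ∈ nhds (0:ℝ) := by
      apply (hcont.isOpen_preimage U hU).mem_nhds
      simp [hq]
    exact this
  have hzero : ∀ᶠ t : ℝ in nhds (0:ℝ), F (q + t • v) = 0 := by
    filter_upwards [hmem] with t ht
    apply h _ ht
    simp [hq4, hv4]
  have hinner : HasDerivAt (fun t : ℝ => q + t • v) v 0 := by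
    simpa using ((hasDerivAt_id (0:ℝ)).smul_const v).const_add q
  have houter : HasDerivAt (fun t : ℝ => F (q + t • v)) (fderiv ℝ F q v) 0 := by
    have hd := (hF.differentiable (by simp) (q + (0:ℝ) • v)).hasFDerivAt
    have := hd.comp_hasDerivAt (0:ℝ) hinner
    rw [zero_smul, add_zero] at this
    exact this
  have hzero' : HasDerivAt (fun t : ℝ => F (q + t • v)) 0 0 := by
    have hcst : HasDerivAt (fun _ : ℝ => (0:ℝ)) 0 0 := hasDerivAt_const _ _
    exact hcst.congr_of_eventuallyEq (by filter_upwards [hzero] with t ht; simp [ht])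
  have := houter.unique hzero'
  simpa [pd] using this

lemma D_mem {p v : E6} (h : v ∈ D p) :
    v 0 = p 4 * v 3 ∧ v 1 = p 4 * p 2 * v 3 ∧ v 2 = p 4 * p 3 * v 3 ∧ v 4 = p 5 * v 3 := by
  rw [D, Submodule.mem_span_pair] at h
  obtain ⟨m, n, hmn⟩ := h
  have h0 := congrFun hmn 0
  have h1 := congrFun hmn 1
  have h2 := congrFun hmn 2
  have h3 := congrFun hmn 3
  have h4 := congrFun hmn 4
  simp [X1, X2] at h0 h1 h2 h3 h4
  refine ⟨?_, ?_, ?_, ?_⟩ <;> (rw [← h3]) <;> linarith [h0, h1, h2, h4]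

lemma X1_eq (p : E6) : X1 p = Pi.single 5 1 := by
  funext k
  fin_cases k <;> simp [X1, Pi.single_apply]

@[fun_prop] lemma X2_contDiff : ContDiff ℝ (⊤ : ℕ∞) X2 := by
  rw [show X2 = fun p => ![p 4, p 4 * p 2, p 4 * p 3, 1, p 5, 0] from rfl]
  apply contDiff_pi.mpr
  intro i
  have c4 : ContDiff ℝ (⊤ : ℕ∞) (fun p : E6 => p 4) := contDiff_coord 4
  have c2 : ContDiff ℝ (⊤ : ℕ∞) (fun p : E6 => p 2) := contDiff_coord 2
  have c3 : ContDiff ℝ (⊤ : ℕ∞) (fun p : E6 => p 3) := contDiff_coord 3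
  have c5 : ContDiff ℝ (⊤ : ℕ∞) (fun p : E6 => p 5) := contDiff_coord 5
  fin_cases i <;> simp only [vec6_0, vec6_1, vec6_2, vec6_3, vec6_4, vec6_5] <;>
    first
    | exact c4
    | exact c4.mul c2
    | exact c4.mul c3
    | exact c5
    | exact contDiff_const

/-- `DX f = p₄∂₀f + p₄p₂∂₁f + p₄p₃∂₂f + ∂₃f + p₅∂₄f` : derivative along `X2`. -/
noncomputable def DXF (f : E6 → ℝ) : E6 → ℝ := fun p =>
  p 4 * pd 0 f p + p 4 * p 2 * pd 1 f p + p 4 * p 3 * pd 2 f p + pd 3 f p + p 5 * pd 4 f p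

/-- `Y f = ∂₀f + p₂∂₁f + p₃∂₂f`. -/
noncomputable def YF (f : E6 → ℝ) : E6 → ℝ := fun p =>
  pd 0 f p + p 2 * pd 1 f p + p 3 * pd 2 f p

@[fun_prop] lemma DXF_contDiff {f : E6 → ℝ} (hf : ContDiff ℝ (⊤ : ℕ∞) f) :
    ContDiff ℝ (⊤ : ℕ∞) (DXF f) := by
  unfold DXF; fun_prop

@[fun_prop] lemma YF_contDiff {f : E6 → ℝ} (hf : ContDiff ℝ (⊤ : ℕ∞) f) :
    ContDiff ℝ (⊤ : ℕ∞) (YF f) := by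
  unfold YF; fun_prop

lemma DXF_congr {U : Set E6} (hU : IsOpen U) {f g : E6 → ℝ}
    (h : ∀ p ∈ U, f p = g p) {p : E6} (hp : p ∈ U) :
    DXF f p = DXF g p := by
  unfold DXF
  rw [pd_congr hU h hp 0, pd_congr hU h hp 1, pd_congr hU h hp 2,
    pd_congr hU h hp 3, pd_congr hU h hp 4]

lemma pd5_DXF {f : E6 → ℝ} (hf : ContDiff ℝ (⊤ : ℕ∞) f) (p : E6) :
    pd 5 (DXF f) p = DXF (pd 5 f) p + pd 4 f p := by
  unfold DXF
  simp (disch := fun_prop) only [pd_add, pd_mul, pd_coord]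
  rw [pd_pd_comm hf 5 0, pd_pd_comm hf 5 1, pd_pd_comm hf 5 2,
    pd_pd_comm hf 5 3, pd_pd_comm hf 5 4]
  simp [Pi.single_apply]
  try ring

lemma pd4_DXF {f : E6 → ℝ} (hf : ContDiff ℝ (⊤ : ℕ∞) f) (p : E6) :
    pd 4 (DXF f) p = YF f p + DXF (pd 4 f) p := by
  unfold DXF YF
  simp (disch := fun_prop) only [pd_add, pd_mul, pd_coord]
  rw [pd_pd_comm hf 4 0, pd_pd_comm hf 4 1, pd_pd_comm hf 4 2,
    pd_pd_comm hf 4 3]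
  simp [Pi.single_apply]
  try ring

lemma pd3_YF {f : E6 → ℝ} (hf : ContDiff ℝ (⊤ : ℕ∞) f) (p : E6) :
    pd 3 (YF f) p = YF (pd 3 f) p + pd 2 f p := by
  unfold YF
  simp (disch := fun_prop) only [pd_add, pd_mul, pd_coord]
  rw [pd_pd_comm hf 3 0, pd_pd_comm hf 3 1, pd_pd_comm hf 3 2]
  simp [Pi.single_apply]
  try ring

lemma DXF_c4mul {h : E6 → ℝ} (hh : ContDiff ℝ (⊤ : ℕ∞) h) (p : E6) :
    DXF (fun q => q 4 * h q) p = p 4 * DXF h p + p 5 * h p := by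
  unfold DXF
  simp (disch := fun_prop) only [pd_mul, pd_coord]
  simp [Pi.single_apply]
  try ring

lemma DXF_c42mul {h : E6 → ℝ} (hh : ContDiff ℝ (⊤ : ℕ∞) h) (p : E6) :
    DXF (fun q => q 4 * q 2 * h q) p
      = p 4 * p 2 * DXF h p + (p 4 * p 4 * p 3 + p 5 * p 2) * h p := by
  unfold DXF
  simp (disch := fun_prop) only [pd_mul, pd_coord]
  simp [Pi.single_apply]
  try ring

lemma DXF_c43mul {h : E6 → ℝ} (hh : ContDiff ℝ (⊤ : ℕ∞) h) (p : E6) :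
    DXF (fun q => q 4 * q 3 * h q) p
      = p 4 * p 3 * DXF h p + (p 4 + p 5 * p 3) * h p := by
  unfold DXF
  simp (disch := fun_prop) only [pd_mul, pd_coord]
  simp [Pi.single_apply]
  try ring

lemma DXF_c5mul {h : E6 → ℝ} (hh : ContDiff ℝ (⊤ : ℕ∞) h) (p : E6) :
    DXF (fun q => q 5 * h q) p = p 5 * DXF h p := by
  unfold DXF
  simp (disch := fun_prop) only [pd_mul, pd_coord]
  simp [Pi.single_apply]
  try ring

end Helpers

section Chain
variable {U : Set E6} {c0 c1 c2 c3 c4 c5 : E6 → ℝ}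

lemma step_K0 (hU : IsOpen U)
    (h0 : ContDiff ℝ (⊤ : ℕ∞) c0) (h3 : ContDiff ℝ (⊤ : ℕ∞) c3) (h4 : ContDiff ℝ (⊤ : ℕ∞) c4)
    (hJ0 : ∀ p ∈ U, pd 5 c0 p = p 4 * pd 5 c3 p)
    (hJ4 : ∀ p ∈ U, pd 5 c4 p = p 5 * pd 5 c3 p)
    (hI0 : ∀ p ∈ U, c4 p = DXF c0 p - p 4 * DXF c3 p) :
    ∀ p ∈ U, pd 4 c0 p = p 4 * pd 4 c3 p := by
  intro p hp
  have h := pd_congr hU hI0 hp 5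
  rw [pd_sub (f := DXF c0) (g := fun q => q 4 * DXF c3 q) (by fun_prop) (by fun_prop),
    pd_mul (f := fun q : E6 => q 4) (g := DXF c3) (by fun_prop) (by fun_prop),
    pd_coord 4 5, pd5_DXF h0, pd5_DXF h3,
    DXF_congr hU hJ0 hp, DXF_c4mul (by fun_prop : ContDiff ℝ (⊤ : ℕ∞) (pd 5 c3)),
    hJ4 p hp] at h
  simp [Pi.single_apply] at h
  linear_combination -h

end Chain

section Chain2
variable {U : Set E6} {c0 c1 c2 c3 c4 c5 : E6 → ℝ}

lemma step_K1 (hU : IsOpen U)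
    (h1 : ContDiff ℝ (⊤ : ℕ∞) c1) (h2 : ContDiff ℝ (⊤ : ℕ∞) c2) (h3 : ContDiff ℝ (⊤ : ℕ∞) c3)
    (h4 : ContDiff ℝ (⊤ : ℕ∞) c4)
    (hJ1 : ∀ p ∈ U, pd 5 c1 p = p 4 * p 2 * pd 5 c3 p)
    (hJ2 : ∀ p ∈ U, pd 5 c2 p = p 4 * p 3 * pd 5 c3 p)
    (hJ4 : ∀ p ∈ U, pd 5 c4 p = p 5 * pd 5 c3 p)
    (hI1 : ∀ p ∈ U, p 2 * c4 p + p 4 * c2 p = DXF c1 p - p 4 * p 2 * DXF c3 p) :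
    ∀ p ∈ U, pd 4 c1 p = p 4 * p 2 * pd 4 c3 p := by
  intro p hp
  have h := pd_congr hU hI1 hp 5
  rw [pd_add (f := fun q : E6 => q 2 * c4 q) (g := fun q : E6 => q 4 * c2 q)
        (by fun_prop) (by fun_prop),
    pd_mul (f := fun q : E6 => q 2) (g := c4) (by fun_prop) h4,
    pd_mul (f := fun q : E6 => q 4) (g := c2) (by fun_prop) h2,
    pd_coord 2 5, pd_coord 4 5,
    pd_sub (f := DXF c1) (g := fun q => q 4 * q 2 * DXF c3 q) (by fun_prop) (by fun_prop),
    pd_mul (f := fun q : E6 => q 4 * q 2) (g := DXF c3) (by fun_prop) (by fun_prop),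
    pd_mul (f := fun q : E6 => q 4) (g := fun q : E6 => q 2) (by fun_prop) (by fun_prop),
    pd_coord 4 5, pd_coord 2 5,
    pd5_DXF h1, pd5_DXF h3,
    DXF_congr hU hJ1 hp, DXF_c42mul (by fun_prop : ContDiff ℝ (⊤ : ℕ∞) (pd 5 c3)),
    hJ4 p hp, hJ2 p hp] at h
  simp [Pi.single_apply] at h
  linear_combination -h

lemma step_K2 (hU : IsOpen U)
    (h2 : ContDiff ℝ (⊤ : ℕ∞) c2) (h3 : ContDiff ℝ (⊤ : ℕ∞) c3) (h4 : ContDiff ℝ (⊤ : ℕ∞) c4)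
    (hJ2 : ∀ p ∈ U, pd 5 c2 p = p 4 * p 3 * pd 5 c3 p)
    (hJ4 : ∀ p ∈ U, pd 5 c4 p = p 5 * pd 5 c3 p)
    (hI2 : ∀ p ∈ U, p 3 * c4 p + p 4 * c3 p = DXF c2 p - p 4 * p 3 * DXF c3 p) :
    ∀ p ∈ U, pd 4 c2 p = p 4 * p 3 * pd 4 c3 p := by
  intro p hp
  have h := pd_congr hU hI2 hp 5
  rw [pd_add (f := fun q : E6 => q 3 * c4 q) (g := fun q : E6 => q 4 * c3 q)
        (by fun_prop) (by fun_prop),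
    pd_mul (f := fun q : E6 => q 3) (g := c4) (by fun_prop) h4,
    pd_mul (f := fun q : E6 => q 4) (g := c3) (by fun_prop) h3,
    pd_coord 3 5, pd_coord 4 5,
    pd_sub (f := DXF c2) (g := fun q => q 4 * q 3 * DXF c3 q) (by fun_prop) (by fun_prop),
    pd_mul (f := fun q : E6 => q 4 * q 3) (g := DXF c3) (by fun_prop) (by fun_prop),
    pd_mul (f := fun q : E6 => q 4) (g := fun q : E6 => q 3) (by fun_prop) (by fun_prop),
    pd_coord 4 5, pd_coord 3 5,
    pd5_DXF h2, pd5_DXF h3,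
    DXF_congr hU hJ2 hp, DXF_c43mul (by fun_prop : ContDiff ℝ (⊤ : ℕ∞) (pd 5 c3)),
    hJ4 p hp] at h
  simp [Pi.single_apply] at h
  linear_combination -h

lemma step_K4 (hU : IsOpen U)
    (h3 : ContDiff ℝ (⊤ : ℕ∞) c3) (h4 : ContDiff ℝ (⊤ : ℕ∞) c4) (h5 : ContDiff ℝ (⊤ : ℕ∞) c5)
    (hJ4 : ∀ p ∈ U, pd 5 c4 p = p 5 * pd 5 c3 p)
    (hI4 : ∀ p ∈ U, c5 p = DXF c4 p - p 5 * DXF c3 p) :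
    ∀ p ∈ U, pd 4 c4 p = pd 5 c5 p + DXF c3 p + p 5 * pd 4 c3 p := by
  intro p hp
  have h := pd_congr hU hI4 hp 5
  rw [pd_sub (f := DXF c4) (g := fun q => q 5 * DXF c3 q) (by fun_prop) (by fun_prop),
    pd_mul (f := fun q : E6 => q 5) (g := DXF c3) (by fun_prop) (by fun_prop),
    pd_coord 5 5, pd5_DXF h4, pd5_DXF h3,
    DXF_congr hU hJ4 hp, DXF_c5mul (by fun_prop : ContDiff ℝ (⊤ : ℕ∞) (pd 5 c3))] at h
  simp [Pi.single_apply] at h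
  linear_combination -h

end Chain2

section Chain3
variable {U : Set E6} {c0 c1 c2 c3 c4 c5 : E6 → ℝ}

lemma step_N0 (hU : IsOpen U)
    (h0 : ContDiff ℝ (⊤ : ℕ∞) c0) (h3 : ContDiff ℝ (⊤ : ℕ∞) c3)
    (hK0 : ∀ p ∈ U, pd 4 c0 p = p 4 * pd 4 c3 p)
    (hK4 : ∀ p ∈ U, pd 4 c4 p = pd 5 c5 p + DXF c3 p + p 5 * pd 4 c3 p)
    (hI0 : ∀ p ∈ U, c4 p = DXF c0 p - p 4 * DXF c3 p) :
    ∀ p ∈ U, YF c0 p = pd 5 c5 p + 2 * DXF c3 p + p 4 * YF c3 p := by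
  intro p hp
  have h := pd_congr hU hI0 hp 4
  rw [pd_sub (f := DXF c0) (g := fun q => q 4 * DXF c3 q) (by fun_prop) (by fun_prop),
    pd_mul (f := fun q : E6 => q 4) (g := DXF c3) (by fun_prop) (by fun_prop),
    pd_coord 4 4, pd4_DXF h0, pd4_DXF h3,
    DXF_congr hU hK0 hp, DXF_c4mul (by fun_prop : ContDiff ℝ (⊤ : ℕ∞) (pd 4 c3)),
    hK4 p hp] at h
  simp [Pi.single_apply] at h
  linear_combination -h

lemma step_N1 (hU : IsOpen U)
    (h1 : ContDiff ℝ (⊤ : ℕ∞) c1) (h2 : ContDiff ℝ (⊤ : ℕ∞) c2) (h3 : ContDiff ℝ (⊤ : ℕ∞) c3)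
    (h4 : ContDiff ℝ (⊤ : ℕ∞) c4)
    (hK1 : ∀ p ∈ U, pd 4 c1 p = p 4 * p 2 * pd 4 c3 p)
    (hK2 : ∀ p ∈ U, pd 4 c2 p = p 4 * p 3 * pd 4 c3 p)
    (hK4 : ∀ p ∈ U, pd 4 c4 p = pd 5 c5 p + DXF c3 p + p 5 * pd 4 c3 p)
    (hI1 : ∀ p ∈ U, p 2 * c4 p + p 4 * c2 p = DXF c1 p - p 4 * p 2 * DXF c3 p) :
    ∀ p ∈ U, YF c1 p
      = p 2 * pd 5 c5 p + 2 * p 2 * DXF c3 p + c2 p + p 4 * p 2 * YF c3 p := by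
  intro p hp
  have h := pd_congr hU hI1 hp 4
  rw [pd_add (f := fun q : E6 => q 2 * c4 q) (g := fun q : E6 => q 4 * c2 q)
        (by fun_prop) (by fun_prop),
    pd_mul (f := fun q : E6 => q 2) (g := c4) (by fun_prop) h4,
    pd_mul (f := fun q : E6 => q 4) (g := c2) (by fun_prop) h2,
    pd_coord 2 4, pd_coord 4 4,
    pd_sub (f := DXF c1) (g := fun q => q 4 * q 2 * DXF c3 q) (by fun_prop) (by fun_prop),
    pd_mul (f := fun q : E6 => q 4 * q 2) (g := DXF c3) (by fun_prop) (by fun_prop),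
    pd_mul (f := fun q : E6 => q 4) (g := fun q : E6 => q 2) (by fun_prop) (by fun_prop),
    pd_coord 4 4, pd_coord 2 4,
    pd4_DXF h1, pd4_DXF h3,
    DXF_congr hU hK1 hp, DXF_c42mul (by fun_prop : ContDiff ℝ (⊤ : ℕ∞) (pd 4 c3)),
    hK4 p hp, hK2 p hp] at h
  simp [Pi.single_apply] at h
  linear_combination -h

lemma step_R1 (hU : IsOpen U)
    (h0 : ContDiff ℝ (⊤ : ℕ∞) c0) (h1 : ContDiff ℝ (⊤ : ℕ∞) c1) (h2 : ContDiff ℝ (⊤ : ℕ∞) c2)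
    (hQ1 : ∀ p ∈ U, YF c1 p - p 2 * YF c0 p - c2 p = 0) :
    ∀ p ∈ U, YF (pd 3 c1) p + pd 2 c1 p
      - p 2 * YF (pd 3 c0) p - p 2 * pd 2 c0 p - pd 3 c2 p = 0 := by
  intro p hp
  have h := pd_congr hU (g := fun _ => (0:ℝ)) hQ1 hp 3
  rw [pd_sub (f := fun q => YF c1 q - q 2 * YF c0 q) (g := c2) (by fun_prop) h2,
    pd_sub (f := YF c1) (g := fun q => q 2 * YF c0 q) (by fun_prop) (by fun_prop),
    pd_mul (f := fun q : E6 => q 2) (g := YF c0) (by fun_prop) (by fun_prop),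
    pd_coord 2 3, pd3_YF h0, pd3_YF h1, pd_const] at h
  simp [Pi.single_apply] at h
  linear_combination h

end Chain3

section Chain4
variable {U : Set E6} {c0 c1 c2 c3 c4 c5 : E6 → ℝ}

lemma main_chain (hU : IsOpen U)
    (h0 : ContDiff ℝ (⊤ : ℕ∞) c0) (h1 : ContDiff ℝ (⊤ : ℕ∞) c1) (h2 : ContDiff ℝ (⊤ : ℕ∞) c2)
    (h3 : ContDiff ℝ (⊤ : ℕ∞) c3) (h4 : ContDiff ℝ (⊤ : ℕ∞) c4) (h5 : ContDiff ℝ (⊤ : ℕ∞) c5)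
    (hJ0 : ∀ p ∈ U, pd 5 c0 p = p 4 * pd 5 c3 p)
    (hJ1 : ∀ p ∈ U, pd 5 c1 p = p 4 * p 2 * pd 5 c3 p)
    (hJ2 : ∀ p ∈ U, pd 5 c2 p = p 4 * p 3 * pd 5 c3 p)
    (hJ4 : ∀ p ∈ U, pd 5 c4 p = p 5 * pd 5 c3 p)
    (hI0 : ∀ p ∈ U, c4 p = DXF c0 p - p 4 * DXF c3 p)
    (hI1 : ∀ p ∈ U, p 2 * c4 p + p 4 * c2 p = DXF c1 p - p 4 * p 2 * DXF c3 p)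
    (hI2 : ∀ p ∈ U, p 3 * c4 p + p 4 * c3 p = DXF c2 p - p 4 * p 3 * DXF c3 p)
    (hI4 : ∀ p ∈ U, c5 p = DXF c4 p - p 5 * DXF c3 p) :
    ∀ p ∈ U, p 4 = 0 → c4 p = 0 := by
  have hK0 := step_K0 hU h0 h3 h4 hJ0 hJ4 hI0
  have hK1 := step_K1 hU h1 h2 h3 h4 hJ1 hJ2 hJ4 hI1
  have hK2 := step_K2 hU h2 h3 h4 hJ2 hJ4 hI2
  have hK4 := step_K4 hU h3 h4 h5 hJ4 hI4
  have hN0 := step_N0 hU h0 h3 hK0 hK4 hI0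
  have hN1 := step_N1 hU h1 h2 h3 h4 hK1 hK2 hK4 hI1
  have hQ1 : ∀ p ∈ U, YF c1 p - p 2 * YF c0 p - c2 p = 0 := fun p hp => by
    linear_combination (hN1 p hp) - p 2 * (hN0 p hp)
  have hR1 := step_R1 hU h0 h1 h2 hQ1
  -- slice identities
  have hL0 : ∀ p ∈ U, p 4 = 0 → pd 3 c0 p - c4 p = 0 := by
    intro p hp h4p
    have h := hI0 p hp
    have hk := hK0 p hp
    simp only [DXF] at h
    rw [h4p] at h hk
    linear_combination -h - p 5 * hk
  have hL1 : ∀ p ∈ U, p 4 = 0 → pd 3 c1 p - p 2 * c4 p = 0 := by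
    intro p hp h4p
    have h := hI1 p hp
    have hk := hK1 p hp
    simp only [DXF] at h
    rw [h4p] at h hk
    linear_combination -h - p 5 * hk
  have hL2 : ∀ p ∈ U, p 4 = 0 → pd 3 c2 p - p 3 * c4 p = 0 := by
    intro p hp h4p
    have h := hI2 p hp
    have hk := hK2 p hp
    simp only [DXF] at h
    rw [h4p] at h hk
    linear_combination -h - p 5 * hk
  -- tangential derivatives of the slice identities
  have hE0 : ∀ p ∈ U, p 4 = 0 → ∀ j : Fin 6, j ≠ 4 →
      pd j (pd 3 c0) p - pd j c4 p = 0 := by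
    intro q hq hq4 j hj
    have h := slice_pd hU (F := fun p => pd 3 c0 p - c4 p) (by fun_prop) hL0 hq hq4 hj
    rw [pd_sub (f := pd 3 c0) (g := c4) (by fun_prop) h4] at h
    exact h
  have hE1 : ∀ p ∈ U, p 4 = 0 → ∀ j : Fin 6, j ≠ 4 →
      pd j (pd 3 c1) p - (p 2 * pd j c4 p + c4 p * (Pi.single j (1:ℝ) : E6) 2) = 0 := by
    intro q hq hq4 j hj
    have h := slice_pd hU (F := fun p => pd 3 c1 p - p 2 * c4 p) (by fun_prop) hL1 hq hq4 hj
    rw [pd_sub (f := pd 3 c1) (g := fun q : E6 => q 2 * c4 q) (by fun_prop) (by fun_prop),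
      pd_mul (f := fun q : E6 => q 2) (g := c4) (by fun_prop) h4, pd_coord 2 j] at h
    exact h
  have hP1 : ∀ p ∈ U, p 4 = 0 → pd 2 c1 p - p 2 * pd 2 c0 p = 0 := by
    intro q hq hq4
    have h := hR1 q hq
    simp only [YF] at h
    have e10 := hE1 q hq hq4 0 (by decide)
    have e11 := hE1 q hq hq4 1 (by decide)
    have e12 := hE1 q hq hq4 2 (by decide)
    have e00 := hE0 q hq hq4 0 (by decide)
    have e01 := hE0 q hq hq4 1 (by decide)
    have e02 := hE0 q hq hq4 2 (by decide)
    have eL2 := hL2 q hq hq4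
    simp [Pi.single_apply] at e10 e11 e12 e00 e01 e02
    linear_combination h - e10 - q 2 * e11 - q 3 * e12 + q 2 * e00
      + q 2 * q 2 * e01 + q 2 * q 3 * e02 + eL2
  -- final step
  intro q hq hq4
  have h := slice_pd hU (F := fun p => pd 2 c1 p - p 2 * pd 2 c0 p) (by fun_prop) hP1
    hq hq4 (j := 3) (by decide)
  rw [pd_sub (f := pd 2 c1) (g := fun q : E6 => q 2 * pd 2 c0 q) (by fun_prop) (by fun_prop),
    pd_mul (f := fun q : E6 => q 2) (g := pd 2 c0) (by fun_prop) (by fun_prop),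
    pd_coord 2 3, pd_pd_comm h1 3 2 q, pd_pd_comm h0 3 2 q] at h
  have e12 := hE1 q hq hq4 2 (by decide)
  have e02 := hE0 q hq hq4 2 (by decide)
  simp [Pi.single_apply] at e12 e02 h
  linear_combination h - e12 + q 2 * e02

end Chain4

section Bracket
variable {s : E6 → E6}

lemma fderiv_X2dir (f : E6 → ℝ) (p : E6) : fderiv ℝ f p (X2 p) = DXF f p := by
  rw [fderiv_expand (X2 p)]
  simp only [X2, Fin.sum_univ_six, vec6_0, vec6_1, vec6_2, vec6_3, vec6_4, vec6_5, DXF]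
  ring

lemma lieB_X1 (hs : ContDiff ℝ (⊤ : ℕ∞) s) (p : E6) (k : Fin 6) :
    lieBracket s X1 p k = -(pd 5 (fun q => s q k) p) := by
  unfold lieBracket
  rw [Pi.sub_apply]
  have hconst : fderiv ℝ X1 p = 0 := by
    unfold X1; exact (hasFDerivAt_const _ _).fderiv
  rw [hconst]
  have h2 : fderiv ℝ s p (X1 p) k = pd 5 (fun q => s q k) p := by
    rw [fderiv_comp_proj hs, X1_eq]; rfl
  rw [h2]
  simp

lemma lieB_X2 (hs : ContDiff ℝ (⊤ : ℕ∞) s) (p : E6) (k : Fin 6) :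
    lieBracket s X2 p k
      = fderiv ℝ (fun q => X2 q k) p (s p) - DXF (fun q => s q k) p := by
  unfold lieBracket
  rw [Pi.sub_apply, fderiv_comp_proj hs, fderiv_X2dir, fderiv_comp_proj X2_contDiff]

lemma fd_coord (i : Fin 6) (p w : E6) : fderiv ℝ (fun q : E6 => q i) p w = w i := by
  rw [fderiv_expand]
  simp [pd_coord, Pi.single_apply, Fin.sum_univ_six]

lemma fd_c42 (p w : E6) :
    fderiv ℝ (fun q : E6 => q 4 * q 2) p w = w 4 * p 2 + p 4 * w 2 := by
  rw [fderiv_expand]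
  simp (disch := fun_prop) only [pd_mul, pd_coord]
  simp [Fin.sum_univ_six, Pi.single_apply]
  ring

lemma fd_c43 (p w : E6) :
    fderiv ℝ (fun q : E6 => q 4 * q 3) p w = w 4 * p 3 + p 4 * w 3 := by
  rw [fderiv_expand]
  simp (disch := fun_prop) only [pd_mul, pd_coord]
  simp [Fin.sum_univ_six, Pi.single_apply]
  ring

lemma fd_const (c : ℝ) (p w : E6) : fderiv ℝ (fun _ : E6 => c) p w = 0 := by
  rw [fderiv_expand]
  simp [pd_const]

lemma key {U : Set E6} (hU : IsOpen U) (hs : ContDiff ℝ (⊤ : ℕ∞) s)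
    (hA : ∀ p ∈ U, lieBracket s X1 p ∈ D p)
    (hB : ∀ p ∈ U, lieBracket s X2 p ∈ D p) :
    ∀ p ∈ U, p 4 = 0 → s p 4 = 0 := by
  have hck : ∀ k : Fin 6, ContDiff ℝ (⊤ : ℕ∞) (fun q => s q k) := fun k =>
    (ContinuousLinearMap.proj k : E6 →L[ℝ] ℝ).contDiff.comp hs
  refine main_chain hU (c0 := fun q => s q 0) (c1 := fun q => s q 1) (c2 := fun q => s q 2)
    (c3 := fun q => s q 3) (c4 := fun q => s q 4) (c5 := fun q => s q 5)
    (hck 0) (hck 1) (hck 2) (hck 3) (hck 4) (hck 5) ?_ ?_ ?_ ?_ ?_ ?_ ?_ ?_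
  · intro p hp
    obtain ⟨m0, _, _, _⟩ := D_mem (hA p hp)
    simp only [lieB_X1 hs] at m0
    linear_combination -m0
  · intro p hp
    obtain ⟨_, m1, _, _⟩ := D_mem (hA p hp)
    simp only [lieB_X1 hs] at m1
    linear_combination -m1
  · intro p hp
    obtain ⟨_, _, m2, _⟩ := D_mem (hA p hp)
    simp only [lieB_X1 hs] at m2
    linear_combination -m2
  · intro p hp
    obtain ⟨_, _, _, m4⟩ := D_mem (hA p hp)
    simp only [lieB_X1 hs] at m4
    linear_combination -m4
  · intro p hp
    obtain ⟨m0, _, _, _⟩ := D_mem (hB p hp)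
    simp only [lieB_X2 hs] at m0
    rw [show (fun q : E6 => X2 q 0) = (fun q : E6 => q 4) from rfl, fd_coord] at m0
    rw [show (fun q : E6 => X2 q 3) = (fun _ : E6 => (1:ℝ)) from rfl, fd_const] at m0
    linear_combination m0
  · intro p hp
    obtain ⟨_, m1, _, _⟩ := D_mem (hB p hp)
    simp only [lieB_X2 hs] at m1
    rw [show (fun q : E6 => X2 q 1) = (fun q : E6 => q 4 * q 2) from rfl, fd_c42] at m1
    rw [show (fun q : E6 => X2 q 3) = (fun _ : E6 => (1:ℝ)) from rfl, fd_const] at m1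
    linear_combination m1
  · intro p hp
    obtain ⟨_, _, m2, _⟩ := D_mem (hB p hp)
    simp only [lieB_X2 hs] at m2
    rw [show (fun q : E6 => X2 q 2) = (fun q : E6 => q 4 * q 3) from rfl, fd_c43] at m2
    rw [show (fun q : E6 => X2 q 3) = (fun _ : E6 => (1:ℝ)) from rfl, fd_const] at m2
    linear_combination m2
  · intro p hp
    obtain ⟨_, _, _, m4⟩ := D_mem (hB p hp)
    simp only [lieB_X2 hs] at m4
    rw [show (fun q : E6 => X2 q 4) = (fun q : E6 => q 5) from rfl, fd_coord] at m4
    rw [show (fun q : E6 => X2 q 3) = (fun _ : E6 => (1:ℝ)) from rfl, fd_const] at m4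
    linear_combination m4

end Bracket

/-- The class-6 Goursat distribution is not a 4-contact distribution: on no open
neighbourhood of the origin do there exist four commuting smooth Lie symmetries of `D`
whose span is a pointwise complement to `D`. -/
theorem goursat_class6_not_four_contact :
    ¬ ∃ (U : Set (Fin 6 → ℝ)) (S : Fin 4 → (Fin 6 → ℝ) → (Fin 6 → ℝ)),
      IsOpen U ∧ (0 : Fin 6 → ℝ) ∈ U ∧
      (∀ i, ContDiff ℝ (⊤ : ℕ∞) (S i)) ∧
      (∀ i j, ∀ p ∈ U, lieBracket (S i) (S j) p = 0) ∧
      (∀ i, ∀ X : (Fin 6 → ℝ) → (Fin 6 → ℝ), ContDiff ℝ (⊤ : ℕ∞) X →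
        (∀ p ∈ U, X p ∈ D p) → ∀ p ∈ U, lieBracket (S i) X p ∈ D p) ∧
      (∀ p ∈ U,
        Submodule.span ℝ (Set.range fun i => S i p) ⊔ D p = ⊤ ∧
        Submodule.span ℝ (Set.range fun i => S i p) ⊓ D p = ⊥) := by
  rintro ⟨U, S, hUopen, hU0, hSmooth, -, hSym, hCompl⟩
  have hX1D : ∀ p ∈ U, X1 p ∈ D p := fun p _ =>
    Submodule.subset_span (Set.mem_insert _ _)
  have hX2D : ∀ p ∈ U, X2 p ∈ D p := fun p _ =>
    Submodule.subset_span (Set.mem_insert_of_mem _ rfl)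
  have hX1smooth : ContDiff ℝ (⊤ : ℕ∞) X1 := by unfold X1; exact contDiff_const
  have hs4 : ∀ i, S i 0 4 = 0 := by
    intro i
    exact key hUopen (hSmooth i)
      (hSym i X1 hX1smooth hX1D) (hSym i X2 X2_contDiff hX2D) 0 hU0 rfl
  obtain ⟨htop, -⟩ := hCompl 0 hU0
  set φ : E6 →ₗ[ℝ] ℝ := LinearMap.proj 4 with hφ
  have hle : Submodule.span ℝ (Set.range fun i => S i 0) ⊔ D 0 ≤ LinearMap.ker φ := by
    apply sup_le
    · apply Submodule.span_le.mpr
      rintro v ⟨i, rfl⟩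
      simp only [LinearMap.mem_ker, SetLike.mem_coe, hφ, LinearMap.proj_apply]
      exact hs4 i
    · rw [D]
      apply Submodule.span_le.mpr
      intro v hv
      rcases Set.mem_insert_iff.mp hv with rfl | hv2
      · simp only [LinearMap.mem_ker, SetLike.mem_coe, hφ, LinearMap.proj_apply]
        show X1 0 4 = 0
        rfl
      · rcases hv2 with rfl
        simp only [LinearMap.mem_ker, SetLike.mem_coe, hφ, LinearMap.proj_apply]
        show X2 0 4 = 0
        show (0 : E6) 5 = 0
        rfl
  rw [htop] at hle
  have hmem : (Pi.single 4 1 : E6) ∈ LinearMap.ker φ := hle Submodule.mem_top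
  rw [LinearMap.mem_ker, hφ, LinearMap.proj_apply] at hmem
  rw [Pi.single_eq_same] at hmem
  exact one_ne_zero hmem
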